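/- arXiv:2208.01002 — 2 statements merged into one kernel-verified Lean document; each statement's English description precedes it below -/
import Mathlib

section
/- If the erasure set E is not a superset of any nonempty stopping set of T(H), then the peeling decoder fully erases E: the process of repeatedly removing dangling bits terminates with the empty set, regardless of the order in which dangling bits are chosen. -/
/-- A subset `S` of bit nodes is a stopping set for the Tanner graph of `H`. -/
def IsStoppingSet {r n : ℕ} (H : Matrix (Fin r) (Fin n) (ZMod 2)) (S : Finset (Fin n)) : Prop :=
  ∀ i : Fin r, (S.filter (fun j => H i j = 1)).card ≠ 1

/-- `j` is a dangling bit of `S`. -/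
def IsDanglingBit {r n : ℕ} (H : Matrix (Fin r) (Fin n) (ZMod 2)) (S : Finset (Fin n))
    (j : Fin n) : Prop :=
  j ∈ S ∧ ∃ i : Fin r, H i j = 1 ∧ (S.filter (fun k => H i k = 1)).card = 1

/-- One step of the peeling decoder: remove a dangling bit from the erasure. -/
def PeelStep {r n : ℕ} (H : Matrix (Fin r) (Fin n) (ZMod 2)) (S S' : Finset (Fin n)) : Prop :=
  ∃ j : Fin n, IsDanglingBit H S j ∧ S' = S.erase j

section

variable {r n : ℕ} {H : Matrix (Fin r) (Fin n) (ZMod 2)}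

theorem PeelStep.subset {S S' : Finset (Fin n)} (h : PeelStep H S S') : S' ⊆ S := by
  obtain ⟨j, -, rfl⟩ := h
  exact Finset.erase_subset j S

theorem subset_of_reflTransGen_peelStep {E R : Finset (Fin n)}
    (h : Relation.ReflTransGen (PeelStep H) E R) : R ⊆ E := by
  induction h with
  | refl => exact Finset.Subset.refl E
  | tail _ hstep ih => exact hstep.subset.trans ih

theorem isStoppingSet_of_forall_not_peelStep {R : Finset (Fin n)}
    (hstuck : ∀ R', ¬ PeelStep H R R') : IsStoppingSet H R := by
  intro i hcard
  obtain ⟨j, hj⟩ := Finset.card_eq_one.mp hcard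
  have hjmem : j ∈ R.filter (fun k => H i k = 1) := hj ▸ Finset.mem_singleton_self j
  obtain ⟨hjR, hij⟩ := Finset.mem_filter.mp hjmem
  exact hstuck (R.erase j) ⟨j, ⟨hjR, i, hij, hcard⟩, rfl⟩

end

/-- If the erasure `E` contains no nonempty stopping set, then every
maximal sequence of dangling-bit removals starting from `E` terminates with the empty
set, regardless of the order of removals. -/
theorem peeling_succeeds_of_no_stopping_set
    {r n : ℕ} (H : Matrix (Fin r) (Fin n) (ZMod 2)) (E : Finset (Fin n))
    (hno : ∀ T ⊆ E, IsStoppingSet H T → T = ∅) :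
    ∀ R : Finset (Fin n), Relation.ReflTransGen (PeelStep H) E R →
      (∀ R', ¬ PeelStep H R R') → R = ∅ := fun R hpeel hstuck =>
  hno R (subset_of_reflTransGen_peelStep hpeel) (isStoppingSet_of_forall_not_peelStep hstuck)
end

section
/- Vertical stopping sets: if S_B is a stopping set for the Tanner graph T(H), then for every b ∈ B (check-node index of T(H)), the set {b} × S_B of qubits of HGP(H) in the B×B block is a stopping set for the Tanner graph T(H_Z) of the hypergraph product code. -/
/-- Qubits of `HGP(H)`: pairs in `A × A` (bit-bit) or `B × B` (check-check),
with `|A| = n`, `|B| = r`. -/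
abbrev QubitIdx (n r : ℕ) := (Fin n × Fin n) ⊕ (Fin r × Fin r)

/-- Z-type parity-check matrix of the hypergraph product code `HGP(H)`: the Z generator
indexed by `(b, a') ∈ B × A` acts on qubits `(a, a')` with `H b a = 1` and on qubits
`(b, b')` with `H b' a' = 1`. -/
def hgpHZ {r n : ℕ} (H : Matrix (Fin r) (Fin n) (ZMod 2)) :
    Matrix (Fin r × Fin n) (QubitIdx n r) (ZMod 2) :=
  fun c q =>
    match q with
    | Sum.inl (a, a'') => if a'' = c.2 then H c.1 a else 0
    | Sum.inr (b'', b') => if b'' = c.1 then H b' c.2 else 0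

/-! The generator `(c, a')` of `H_Z` meets the slice `{b} × B` only when `c = b`, and then in
`{b} × {b' | H b' a' = 1}`. So its intersection with `{b} × S_B` is a copy of the neighbourhood of
the check `a'` inside `S_B`, which never has exactly one element. -/

lemma hgpHZ_inr {r n : ℕ} (H : Matrix (Fin r) (Fin n) (ZMod 2)) (c : Fin r × Fin n)
    (b b' : Fin r) :
    hgpHZ H c (Sum.inr (b, b')) = if b = c.1 then H b' c.2 else 0 :=
  rfl

lemma card_filter_hgpHZ_image_inr {r n : ℕ} (H : Matrix (Fin r) (Fin n) (ZMod 2))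
    (SB : Finset (Fin r)) (b : Fin r) (c : Fin r × Fin n) :
    ((SB.image (fun b' => (Sum.inr (b, b') : QubitIdx n r))).filter
        (fun q => hgpHZ H c q = 1)).card =
      if b = c.1 then (SB.filter (fun b' => H b' c.2 = 1)).card else 0 := by
  have hinj : Function.Injective (fun b' : Fin r => (Sum.inr (b, b') : QubitIdx n r)) :=
    Sum.inr_injective.comp (Prod.mk_right_injective b)
  rw [Finset.filter_image, Finset.card_image_of_injective _ hinj]
  simp only [hgpHZ_inr]
  split_ifs
  · rfl
  · simp

/-- **vertical stopping sets.** If `S_B ⊆ B` is a stopping set for the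
Tanner graph `T(H)` (with the `B`-side as variable nodes, adjacency `H b' a'`), then
for every `b ∈ B` the set `{b} × S_B` of qubits of `HGP(H)` is a stopping set for the
Tanner graph `T(H_Z)`. -/
theorem vertical_stopping_sets
    {r n : ℕ} (H : Matrix (Fin r) (Fin n) (ZMod 2)) (SB : Finset (Fin r))
    (hSB : ∀ a' : Fin n, (SB.filter (fun b' => H b' a' = 1)).card ≠ 1)
    (b : Fin r) :
    ∀ c : Fin r × Fin n,
      (((SB.image (fun b' => (Sum.inr (b, b') : QubitIdx n r)))).filter
          (fun q => hgpHZ H c q = 1)).card ≠ 1 := by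
  intro c
  rw [card_filter_hgpHZ_image_inr]
  split_ifs
  · exact hSB c.2
  · exact zero_ne_one
end
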